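/- Let F : ℝⁿ × ℝᵐ → ℝⁿ be continuous, E : ℝ → ℝᵐ continuous converging to E*, and X : ℝ → ℝⁿ a solution of X'(t) = F(X(t), E(t)) converging to X*. Define f(x, e) := x + F(x, e). Then X* is a fixed point of the map x ↦ f(x, E*), i.e. X* = X* + F(X*, E*). -/

import Mathlib

/-!
Along the trajectory, `X' = F(X, E) → F(X*, E*)`. A differentiable function with a limit at
infinity whose derivative also has a limit must have derivative limit `0`: by the mean value
inequality the increments `X (t + 1) - X t` tend to the derivative limit, while they tend to `0`
because `X` converges. Hence `F(X*, E*) = 0` and `X* = X* + F(X*, E*)`.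
-/

open Filter Topology Set

section

variable {E : Type*} [NormedAddCommGroup E] [NormedSpace ℝ E] {f : ℝ → E} {L : E}

theorem tendsto_sub_add_one_of_tendsto_deriv (hf : Differentiable ℝ f)
    (hf' : Tendsto (deriv f) atTop (𝓝 L)) :
    Tendsto (fun t => f (t + 1) - f t) atTop (𝓝 L) := by
  refine Metric.tendsto_atTop.2 fun ε hε => ?_
  obtain ⟨T, hT⟩ := Metric.tendsto_atTop.1 hf' (ε / 2) (half_pos hε)
  refine ⟨T, fun t ht => ?_⟩
  -- mean value inequality for `s ↦ f s - s • L`, whose derivative is `deriv f s - L`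
  have hmvt := norm_image_sub_le_of_norm_deriv_le_segment' (f := fun s => f s - s • L)
    (fun s _ => ((hf s).hasDerivAt.sub ((hasDerivAt_id s).smul_const L)).hasDerivWithinAt)
    (fun s hs => by simpa [dist_eq_norm] using (hT s (ht.trans hs.1)).le)
    (t + 1) (right_mem_Icc.2 (le_add_of_nonneg_right zero_le_one))
  have hrw : f (t + 1) - (t + 1) • L - (f t - t • L) = f (t + 1) - f t - L := by
    rw [add_smul, one_smul]; abel
  rw [dist_eq_norm, ← hrw]
  linarith

theorem eq_zero_of_tendsto_of_tendsto_deriv {a : E} (hf : Differentiable ℝ f)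
    (hfa : Tendsto f atTop (𝓝 a)) (hf' : Tendsto (deriv f) atTop (𝓝 L)) : L = 0 := by
  have hshift : Tendsto (fun t => f (t + 1)) atTop (𝓝 a) :=
    hfa.comp (tendsto_atTop_add_const_right _ 1 tendsto_id)
  refine tendsto_nhds_unique (tendsto_sub_add_one_of_tendsto_deriv hf hf') ?_
  simpa using hshift.sub hfa

end

theorem equilibrium_is_fixed_point_of_scm_general (n m : ℕ)
    (F : EuclideanSpace ℝ (Fin n) × EuclideanSpace ℝ (Fin m) → EuclideanSpace ℝ (Fin n))
    (hF : Continuous F)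
    (X : ℝ → EuclideanSpace ℝ (Fin n)) (E : ℝ → EuclideanSpace ℝ (Fin m))
    (hXdiff : Differentiable ℝ X)
    (hode : ∀ t : ℝ, deriv X t = F (X t, E t))
    (Xstar : EuclideanSpace ℝ (Fin n)) (Estar : EuclideanSpace ℝ (Fin m))
    (hXconv : Tendsto X atTop (nhds Xstar))
    (hEconv : Tendsto E atTop (nhds Estar))
    (f : EuclideanSpace ℝ (Fin n) × EuclideanSpace ℝ (Fin m) → EuclideanSpace ℝ (Fin n))
    (hf : ∀ x e, f (x, e) = x + F (x, e)) :
    Xstar = f (Xstar, Estar) := by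
  have hderiv : Tendsto (deriv X) atTop (𝓝 (F (Xstar, Estar))) := by
    rw [funext hode]
    exact (hF.tendsto _).comp (hXconv.prodMk_nhds hEconv)
  rw [hf, eq_zero_of_tendsto_of_tendsto_deriv hXdiff hXconv hderiv, add_zero]

theorem equilibrium_is_fixed_point_of_scm (n m : ℕ)
    (F : EuclideanSpace ℝ (Fin n) × EuclideanSpace ℝ (Fin m) → EuclideanSpace ℝ (Fin n))
    (hF : Continuous F)
    (X : ℝ → EuclideanSpace ℝ (Fin n)) (E : ℝ → EuclideanSpace ℝ (Fin m))
    (hXdiff : Differentiable ℝ X) (hE : Continuous E)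
    (hode : ∀ t : ℝ, deriv X t = F (X t, E t))
    (Xstar : EuclideanSpace ℝ (Fin n)) (Estar : EuclideanSpace ℝ (Fin m))
    (hXconv : Tendsto X atTop (nhds Xstar))
    (hEconv : Tendsto E atTop (nhds Estar))
    (f : EuclideanSpace ℝ (Fin n) × EuclideanSpace ℝ (Fin m) → EuclideanSpace ℝ (Fin n))
    (hf : ∀ x e, f (x, e) = x + F (x, e)) :
    Xstar = f (Xstar, Estar) :=
  equilibrium_is_fixed_point_of_scm_general n m F hF X E hXdiff hode Xstar Estar hXconv hEconv f hf
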